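/- arXiv:1506.05618 — 2 statements merged into one kernel-verified Lean document; each statement's English description precedes it below -/
import Mathlib

section
/- Let x₀, y₀ ∈ ℝ, let u, g, h : [x₀,∞) × [y₀,∞) → [0,∞) be continuous, and let L, H : [x₀,∞) × [y₀,∞) × [0,∞) → [0,∞) be continuous and satisfy 0 ≤ L(x,y,u) − L(x,y,v) ≤ H(x,y,v)·(u − v) whenever u ≥ v ≥ 0. If u(x,y) ≤ g(x,y) + h(x,y) ∫_{x₀}^{x} ∫_{x₀}^{s} ∫_{y₀}^{y} L(η,τ,u(η,τ)) dτ dη ds for all x ≥ x₀ and y ≥ y₀, then u(x,y) ≤ g(x,y) + h(x,y) · ( ∫_{x₀}^{x} ∫_{x₀}^{s} ∫_{y₀}^{y} L(η,τ,g(η,τ)) dτ dη ds ) · exp( ∫_{x₀}^{x} ∫_{x₀}^{s} ∫_{y₀}^{y} H(η,τ,g(η,τ)) h(η,τ) dτ dη ds ) for all x ≥ x₀ and y ≥ y₀. -/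
/-!
Fix `y` and let `z(x) = ∫_{x₀}^x ∫_{x₀}^s ∫_{y₀}^y L(η, τ, u(η, τ))`. As `L ≥ 0`, the hypothesis
gives `u(η, τ) ≤ g + h z(η)` for every `τ ≤ y`, and the one-sided Lipschitz condition turns this
into `z'' ≤ a + b z`, where `a` and `b` are the `τ`-integrals of `L(·, ·, g)` and `H(·, ·, g) h`.
With `A`, `B` the double primitives of `a`, `b` and `z(x₀) = z'(x₀) = 0`, first
`z' - A' - B' z` is nonincreasing (its derivative is `z'' - a - b z - B' z' ≤ 0`), and then so is
`z e^{-B} - A`; hence `z ≤ A e^B`.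
-/

open MeasureTheory Set Function

noncomputable def iteratedIntegral (x₀ : ℝ) (f : ℝ → ℝ) (x : ℝ) : ℝ :=
  ∫ s in x₀..x, ∫ η in x₀..s, f η

section OneVariable

variable {x₀ : ℝ} {f g : ℝ → ℝ}

lemma hasDerivAt_primitive (hf : Continuous f) (x₀ t : ℝ) :
    HasDerivAt (fun x => ∫ η in x₀..x, f η) (f t) t :=
  (hf.integral_hasStrictDerivAt x₀ t).hasDerivAt

lemma continuous_primitive (hf : Continuous f) (x₀ : ℝ) :
    Continuous fun x => ∫ η in x₀..x, f η :=
  intervalIntegral.continuous_primitive (fun _ _ => hf.intervalIntegrable _ _) x₀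

lemma hasDerivAt_iteratedIntegral (hf : Continuous f) (x₀ t : ℝ) :
    HasDerivAt (iteratedIntegral x₀ f) (∫ η in x₀..t, f η) t :=
  hasDerivAt_primitive (continuous_primitive hf x₀) x₀ t

lemma primitive_nonneg (hf : ∀ t, x₀ ≤ t → 0 ≤ f t) {x : ℝ} (hx : x₀ ≤ x) :
    0 ≤ ∫ η in x₀..x, f η :=
  intervalIntegral.integral_nonneg hx fun t ht => hf t ht.1

lemma iteratedIntegral_nonneg (hf : ∀ t, x₀ ≤ t → 0 ≤ f t) {x : ℝ} (hx : x₀ ≤ x) :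
    0 ≤ iteratedIntegral x₀ f x :=
  primitive_nonneg (fun _ => primitive_nonneg hf) hx

lemma iteratedIntegral_mono (hf : Continuous f) (hg : Continuous g)
    (hfg : ∀ t, x₀ ≤ t → f t ≤ g t) {x : ℝ} (hx : x₀ ≤ x) :
    iteratedIntegral x₀ f x ≤ iteratedIntegral x₀ g x :=
  intervalIntegral.integral_mono_on hx ((continuous_primitive hf x₀).intervalIntegrable _ _)
    ((continuous_primitive hg x₀).intervalIntegrable _ _) fun _ hs =>
      intervalIntegral.integral_mono_on hs.1 (hf.intervalIntegrable _ _)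
        (hg.intervalIntegrable _ _) fun t ht => hfg t ht.1

lemma iteratedIntegral_congr (hfg : ∀ t, x₀ ≤ t → f t = g t) {x : ℝ} (hx : x₀ ≤ x) :
    iteratedIntegral x₀ f x = iteratedIntegral x₀ g x :=
  intervalIntegral.integral_congr fun s hs => intervalIntegral.integral_congr fun t ht => by
    rw [uIcc_of_le hx] at hs
    rw [uIcc_of_le hs.1] at ht
    exact hfg t ht.1

@[simp]
lemma iteratedIntegral_self : iteratedIntegral x₀ f x₀ = 0 :=
  intervalIntegral.integral_same

lemma le_of_hasDerivAt_of_nonpos {F F' : ℝ → ℝ} (hF : ∀ t, HasDerivAt F (F' t) t)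
    (hF' : ∀ t, x₀ ≤ t → F' t ≤ 0) {x : ℝ} (hx : x₀ ≤ x) : F x ≤ F x₀ := by
  have hdiff : Differentiable ℝ F := fun t => (hF t).differentiableAt
  refine antitoneOn_of_deriv_nonpos (convex_Ici x₀) hdiff.continuous.continuousOn
    hdiff.differentiableOn (fun t ht => ?_) self_mem_Ici hx hx
  rw [interior_Ici] at ht
  exact (hF t).deriv ▸ hF' t (le_of_lt ht)

theorem iteratedIntegral_le_mul_exp {a b c : ℝ → ℝ} (ha : Continuous a) (hb : Continuous b)
    (hc : Continuous c) (ha0 : ∀ t, x₀ ≤ t → 0 ≤ a t) (hb0 : ∀ t, x₀ ≤ t → 0 ≤ b t)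
    (hc0 : ∀ t, x₀ ≤ t → 0 ≤ c t)
    (hcab : ∀ t, x₀ ≤ t → c t ≤ a t + b t * iteratedIntegral x₀ c t) {x : ℝ} (hx : x₀ ≤ x) :
    iteratedIntegral x₀ c x ≤ iteratedIntegral x₀ a x * Real.exp (iteratedIntegral x₀ b x) := by
  set z := iteratedIntegral x₀ c
  set A := iteratedIntegral x₀ a
  set B := iteratedIntegral x₀ b
  set z₁ := fun t => ∫ η in x₀..t, c η
  set A₁ := fun t => ∫ η in x₀..t, a η
  set B₁ := fun t => ∫ η in x₀..t, b η
  have hz₁_le : ∀ t, x₀ ≤ t → z₁ t ≤ A₁ t + B₁ t * z t := by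
    intro t ht
    have hderiv : ∀ t, HasDerivAt (fun t => z₁ t - A₁ t - B₁ t * z t)
        (c t - a t - (b t * z t + B₁ t * z₁ t)) t := fun t =>
      ((hasDerivAt_primitive hc x₀ t).sub (hasDerivAt_primitive ha x₀ t)).sub
        ((hasDerivAt_primitive hb x₀ t).mul (hasDerivAt_iteratedIntegral hc x₀ t))
    have := (le_of_hasDerivAt_of_nonpos hderiv (fun t ht => by
      nlinarith [hcab t ht, mul_nonneg (primitive_nonneg hb0 ht) (primitive_nonneg hc0 ht)])
      ht).trans_eq (show _ = (0 : ℝ) by simp [z₁, A₁, B₁, z])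
    linarith
  have hderiv : ∀ t, HasDerivAt (fun t => z t * Real.exp (-B t) - A t)
      (z₁ t * Real.exp (-B t) + z t * (Real.exp (-B t) * -B₁ t) - A₁ t) t := fun t =>
    ((hasDerivAt_iteratedIntegral hc x₀ t).mul (hasDerivAt_iteratedIntegral hb x₀ t).neg.exp).sub
      (hasDerivAt_iteratedIntegral ha x₀ t)
  have hderiv_nonpos : ∀ t, x₀ ≤ t →
      z₁ t * Real.exp (-B t) + z t * (Real.exp (-B t) * -B₁ t) - A₁ t ≤ 0 := by
    intro t ht
    have hexp_le : Real.exp (-B t) ≤ 1 :=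
      Real.exp_le_one_iff.2 (neg_nonpos.2 (iteratedIntegral_nonneg hb0 ht))
    nlinarith [mul_le_mul_of_nonneg_right (hz₁_le t ht) (Real.exp_pos (-B t)).le,
      mul_le_mul_of_nonneg_left hexp_le (primitive_nonneg ha0 ht)]
  have hzA : z x * Real.exp (-B x) ≤ A x := by
    have := (le_of_hasDerivAt_of_nonpos hderiv hderiv_nonpos hx).trans_eq
      (show _ = (0 : ℝ) by simp [z, A])
    linarith
  calc z x = z x * Real.exp (-B x) * Real.exp (B x) := by
        rw [mul_assoc, ← Real.exp_add, neg_add_cancel, Real.exp_zero, mul_one]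
    _ ≤ A x * Real.exp (B x) := by gcongr

end OneVariable

noncomputable def tripleIntegral (x₀ y₀ : ℝ) (F : ℝ → ℝ → ℝ) (x y : ℝ) : ℝ :=
  iteratedIntegral x₀ (fun η => ∫ τ in y₀..y, F η τ) x

section TwoVariables

variable {x₀ y₀ : ℝ} {F G A B : ℝ → ℝ → ℝ}

lemma tripleIntegral_nonneg (hF0 : ∀ η τ, x₀ ≤ η → y₀ ≤ τ → 0 ≤ F η τ) {x y : ℝ}
    (hx : x₀ ≤ x) (hy : y₀ ≤ y) : 0 ≤ tripleIntegral x₀ y₀ F x y :=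
  iteratedIntegral_nonneg (fun η hη => primitive_nonneg (hF0 η · hη) hy) hx

lemma tripleIntegral_mono_right (hF : Continuous (uncurry F))
    (hF0 : ∀ η τ, x₀ ≤ η → y₀ ≤ τ → 0 ≤ F η τ) {x y y' : ℝ} (hx : x₀ ≤ x) (hy : y₀ ≤ y)
    (hyy' : y ≤ y') : tripleIntegral x₀ y₀ F x y ≤ tripleIntegral x₀ y₀ F x y' :=
  iteratedIntegral_mono (by fun_prop) (by fun_prop) (fun η hη =>
    intervalIntegral.integral_mono_interval le_rfl hy hyy'
      (ae_restrict_of_forall_mem measurableSet_Ioc fun τ hτ => hF0 η τ hη hτ.1.le)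
      ((hF.uncurry_left η).intervalIntegrable _ _)) hx

lemma tripleIntegral_congr (hFG : ∀ η τ, x₀ ≤ η → y₀ ≤ τ → F η τ = G η τ) {x y : ℝ}
    (hx : x₀ ≤ x) (hy : y₀ ≤ y) : tripleIntegral x₀ y₀ F x y = tripleIntegral x₀ y₀ G x y :=
  iteratedIntegral_congr (fun η hη => intervalIntegral.integral_congr fun τ hτ => by
    rw [uIcc_of_le hy] at hτ
    exact hFG η τ hη hτ.1) hx

theorem tripleIntegral_le_mul_exp_of_continuous (hF : Continuous (uncurry F))
    (hA : Continuous (uncurry A)) (hB : Continuous (uncurry B))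
    (hF0 : ∀ η τ, x₀ ≤ η → y₀ ≤ τ → 0 ≤ F η τ) (hA0 : ∀ η τ, x₀ ≤ η → y₀ ≤ τ → 0 ≤ A η τ)
    (hB0 : ∀ η τ, x₀ ≤ η → y₀ ≤ τ → 0 ≤ B η τ)
    (hFAB : ∀ η τ, x₀ ≤ η → y₀ ≤ τ → F η τ ≤ A η τ + B η τ * tripleIntegral x₀ y₀ F η τ)
    {x y : ℝ} (hx : x₀ ≤ x) (hy : y₀ ≤ y) :
    tripleIntegral x₀ y₀ F x y ≤
      tripleIntegral x₀ y₀ A x y * Real.exp (tripleIntegral x₀ y₀ B x y) := by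
  have hcont : ∀ {K : ℝ → ℝ → ℝ}, Continuous (uncurry K) →
      Continuous fun η => ∫ τ in y₀..y, K η τ := fun hK => by fun_prop
  have hnonneg : ∀ {K : ℝ → ℝ → ℝ}, (∀ η τ, x₀ ≤ η → y₀ ≤ τ → 0 ≤ K η τ) →
      ∀ η, x₀ ≤ η → 0 ≤ ∫ τ in y₀..y, K η τ := fun hK η hη => primitive_nonneg (hK η · hη) hy
  refine iteratedIntegral_le_mul_exp (hcont hA) (hcont hB) (hcont hF) (hnonneg hA0) (hnonneg hB0)
    (hnonneg hF0) (fun η hη => ?_) hx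
  have hint : ∀ {K : ℝ → ℝ → ℝ}, Continuous (uncurry K) →
      IntervalIntegrable (K η) volume y₀ y := fun hK => (hK.uncurry_left η).intervalIntegrable _ _
  calc ∫ τ in y₀..y, F η τ
      ≤ ∫ τ in y₀..y, (A η τ + B η τ * tripleIntegral x₀ y₀ F η y) :=
        intervalIntegral.integral_mono_on hy (hint hF) ((hint hA).add ((hint hB).mul_const _))
          fun τ hτ => (hFAB η τ hη hτ.1).trans <| by
            gcongr
            · exact hB0 η τ hη hτ.1
            · exact tripleIntegral_mono_right hF hF0 hη hτ.1 hτ.2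
    _ = (∫ τ in y₀..y, A η τ) + (∫ τ in y₀..y, B η τ) * iteratedIntegral x₀
          (fun η => ∫ τ in y₀..y, F η τ) η := by
        rw [intervalIntegral.integral_add (hint hA) ((hint hB).mul_const _),
          intervalIntegral.integral_mul_const]
        rfl

lemma exists_continuous_eq_of_continuousOn_Ici_prod
    (hF : ContinuousOn (uncurry F) (Ici x₀ ×ˢ Ici y₀)) :
    ∃ G : ℝ → ℝ → ℝ, Continuous (uncurry G) ∧ ∀ η τ, x₀ ≤ η → y₀ ≤ τ → G η τ = F η τ :=
  ⟨fun η τ => F (max η x₀) (max τ y₀),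
    hF.comp_continuous (f := fun p : ℝ × ℝ => (max p.1 x₀, max p.2 y₀)) (by fun_prop)
      fun p => ⟨le_max_right p.1 x₀, le_max_right p.2 y₀⟩,
    fun η τ hη hτ => by simp [hη, hτ]⟩

theorem tripleIntegral_le_mul_exp (hF : ContinuousOn (uncurry F) (Ici x₀ ×ˢ Ici y₀))
    (hA : ContinuousOn (uncurry A) (Ici x₀ ×ˢ Ici y₀))
    (hB : ContinuousOn (uncurry B) (Ici x₀ ×ˢ Ici y₀))
    (hF0 : ∀ η τ, x₀ ≤ η → y₀ ≤ τ → 0 ≤ F η τ) (hA0 : ∀ η τ, x₀ ≤ η → y₀ ≤ τ → 0 ≤ A η τ)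
    (hB0 : ∀ η τ, x₀ ≤ η → y₀ ≤ τ → 0 ≤ B η τ)
    (hFAB : ∀ η τ, x₀ ≤ η → y₀ ≤ τ → F η τ ≤ A η τ + B η τ * tripleIntegral x₀ y₀ F η τ)
    {x y : ℝ} (hx : x₀ ≤ x) (hy : y₀ ≤ y) :
    tripleIntegral x₀ y₀ F x y ≤
      tripleIntegral x₀ y₀ A x y * Real.exp (tripleIntegral x₀ y₀ B x y) := by
  obtain ⟨F', hF'c, hF'⟩ := exists_continuous_eq_of_continuousOn_Ici_prod hF
  obtain ⟨A', hA'c, hA'⟩ := exists_continuous_eq_of_continuousOn_Ici_prod hA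
  obtain ⟨B', hB'c, hB'⟩ := exists_continuous_eq_of_continuousOn_Ici_prod hB
  rw [← tripleIntegral_congr hF' hx hy, ← tripleIntegral_congr hA' hx hy,
    ← tripleIntegral_congr hB' hx hy]
  refine tripleIntegral_le_mul_exp_of_continuous hF'c hA'c hB'c ?_ ?_ ?_ ?_ hx hy <;>
    intro η τ hη hτ <;> simp only [hF', hA', hB', hη, hτ, tripleIntegral_congr hF' hη hτ]
  exacts [hF0 η τ hη hτ, hA0 η τ hη hτ, hB0 η τ hη hτ, hFAB η τ hη hτ]

end TwoVariables

lemma apply_le_apply_add_mul_sub {ℓ K : ℝ → ℝ}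
    (hℓ : ∀ a b, 0 ≤ b → b ≤ a → 0 ≤ ℓ a - ℓ b ∧ ℓ a - ℓ b ≤ K b * (a - b)) {v g w : ℝ}
    (hv : 0 ≤ v) (hvw : v ≤ w) (hg : 0 ≤ g) (hgw : g ≤ w) : ℓ v ≤ ℓ g + K g * (w - g) := by
  linarith [(hℓ w v hv hvw).1, (hℓ w g hg hgw).2]

lemma continuousOn_comp_of_nonneg {x₀ y₀ : ℝ} {K : ℝ → ℝ → ℝ → ℝ} {v : ℝ → ℝ → ℝ}
    (hK : ContinuousOn (fun z : ℝ × ℝ × ℝ => K z.1 z.2.1 z.2.2) (Ici x₀ ×ˢ Ici y₀ ×ˢ Ici 0))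
    (hv : ContinuousOn (uncurry v) (Ici x₀ ×ˢ Ici y₀))
    (hv0 : ∀ η τ, x₀ ≤ η → y₀ ≤ τ → 0 ≤ v η τ) :
    ContinuousOn (uncurry fun η τ => K η τ (v η τ)) (Ici x₀ ×ˢ Ici y₀) :=
  hK.comp (continuousOn_fst.prodMk (continuousOn_snd.prodMk hv)) fun p hp =>
    ⟨hp.1, hp.2, hv0 p.1 p.2 hp.1 hp.2⟩

/-- Continuous (𝕋₁ = 𝕋₂ = ℝ) case of Theorem 2.3: a nonlinear Gronwall-type
inequality whose kernel L satisfies a one-sided Lipschitz condition with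
comparison function H. -/
theorem stmt_4 (x₀ y₀ : ℝ) (u g h : ℝ → ℝ → ℝ) (L H : ℝ → ℝ → ℝ → ℝ)
    (hu_cont : ContinuousOn (fun z : ℝ × ℝ => u z.1 z.2) (Set.Ici x₀ ×ˢ Set.Ici y₀))
    (hg_cont : ContinuousOn (fun z : ℝ × ℝ => g z.1 z.2) (Set.Ici x₀ ×ˢ Set.Ici y₀))
    (hh_cont : ContinuousOn (fun z : ℝ × ℝ => h z.1 z.2) (Set.Ici x₀ ×ˢ Set.Ici y₀))
    (hL_cont : ContinuousOn (fun z : ℝ × ℝ × ℝ => L z.1 z.2.1 z.2.2)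
      (Set.Ici x₀ ×ˢ Set.Ici y₀ ×ˢ Set.Ici (0 : ℝ)))
    (hH_cont : ContinuousOn (fun z : ℝ × ℝ × ℝ => H z.1 z.2.1 z.2.2)
      (Set.Ici x₀ ×ˢ Set.Ici y₀ ×ˢ Set.Ici (0 : ℝ)))
    (hu_nonneg : ∀ x y, x₀ ≤ x → y₀ ≤ y → 0 ≤ u x y)
    (hg_nonneg : ∀ x y, x₀ ≤ x → y₀ ≤ y → 0 ≤ g x y)
    (hh_nonneg : ∀ x y, x₀ ≤ x → y₀ ≤ y → 0 ≤ h x y)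
    (hL_nonneg : ∀ x y z, x₀ ≤ x → y₀ ≤ y → 0 ≤ z → 0 ≤ L x y z)
    (hH_nonneg : ∀ x y z, x₀ ≤ x → y₀ ≤ y → 0 ≤ z → 0 ≤ H x y z)
    (hLip : ∀ x y a b, x₀ ≤ x → y₀ ≤ y → 0 ≤ b → b ≤ a →
      0 ≤ L x y a - L x y b ∧ L x y a - L x y b ≤ H x y b * (a - b))
    (hineq : ∀ x y, x₀ ≤ x → y₀ ≤ y →
      u x y ≤ g x y + h x y *
        ∫ s in x₀..x, ∫ η in x₀..s, ∫ τ in y₀..y, L η τ (u η τ)) :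
    ∀ x y, x₀ ≤ x → y₀ ≤ y →
      u x y ≤ g x y + h x y *
        (∫ s in x₀..x, ∫ η in x₀..s, ∫ τ in y₀..y, L η τ (g η τ)) *
        Real.exp (∫ s in x₀..x, ∫ η in x₀..s, ∫ τ in y₀..y,
          H η τ (g η τ) * h η τ) := by
  intro x y hx hy
  have hLu0 : ∀ η τ, x₀ ≤ η → y₀ ≤ τ → 0 ≤ L η τ (u η τ) := fun η τ hη hτ =>
    hL_nonneg η τ _ hη hτ (hu_nonneg η τ hη hτ)
  have hkey : ∀ η τ, x₀ ≤ η → y₀ ≤ τ → L η τ (u η τ) ≤ L η τ (g η τ) +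
      H η τ (g η τ) * h η τ * tripleIntegral x₀ y₀ (fun η τ => L η τ (u η τ)) η τ := by
    intro η τ hη hτ
    have hT0 := tripleIntegral_nonneg hLu0 hη hτ
    have := apply_le_apply_add_mul_sub (hLip η τ · · hη hτ) (hu_nonneg η τ hη hτ)
      (hineq η τ hη hτ) (hg_nonneg η τ hη hτ)
      (le_add_of_nonneg_right (mul_nonneg (hh_nonneg η τ hη hτ) hT0))
    rwa [add_sub_cancel_left, ← mul_assoc] at this
  have hT := tripleIntegral_le_mul_exp (B := fun η τ => H η τ (g η τ) * h η τ)
    (continuousOn_comp_of_nonneg hL_cont hu_cont hu_nonneg)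
    (continuousOn_comp_of_nonneg hL_cont hg_cont hg_nonneg)
    ((continuousOn_comp_of_nonneg hH_cont hg_cont hg_nonneg).mul hh_cont) hLu0
    (fun η τ hη hτ => hL_nonneg η τ _ hη hτ (hg_nonneg η τ hη hτ))
    (fun η τ hη hτ => mul_nonneg (hH_nonneg η τ _ hη hτ (hg_nonneg η τ hη hτ))
      (hh_nonneg η τ hη hτ))
    hkey hx hy
  calc u x y ≤ g x y + h x y * tripleIntegral x₀ y₀ (fun η τ => L η τ (u η τ)) x y :=
        hineq x y hx hy
    _ ≤ _ := by
        rw [mul_assoc]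
        exact (add_le_add_iff_left _).2 (mul_le_mul_of_nonneg_left hT (hh_nonneg x y hx hy))
end

section
/- Let x₀, y₀ ∈ ℕ, let g : ℕ × ℕ → ℝ and K : ℕ × ℕ × ℕ × ℕ × ℝ → ℝ, and let q, r : ℕ × ℕ → [0,∞) be such that |K(x,y,η,τ,u) − K(x,y,η,τ,v)| ≤ q(x,y) r(η,τ) |u − v| for all arguments and all u, v ∈ ℝ. Let ε₁, ε₂ ≥ 0 and let u₁, u₂ : ℕ × ℕ → ℝ be such that, for i = 1, 2 and all x ≥ x₀, y ≥ y₀, |u_i(x,y) − ( g(x,y) + Σ_{s=x₀}^{x−1} Σ_{η=x₀}^{s−1} Σ_{τ=y₀}^{y−1} K(x,y,η,τ,u_i(η,τ)) )| ≤ ε_i. Then for all x ≥ x₀ and y ≥ y₀, |u₁(x,y) − u₂(x,y)| ≤ (ε₁ + ε₂) · [ 1 + q(x,y) · ( Σ_{s=x₀}^{x−1} Σ_{η=x₀}^{s−1} Σ_{τ=y₀}^{y−1} r(η,τ) ) · ∏_{s=x₀}^{x−1} ( 1 + Σ_{η=x₀}^{s−1} Σ_{τ=y₀}^{y−1} r(η,τ)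 q(η,τ) ) ]. -/
/-!
The difference `w = |u₁ - u₂|` satisfies the sum inequality
`w(x,y) ≤ ε₁ + ε₂ + q(x,y) · ΣΣΣ r·w`, by the triangle inequality and the Lipschitz bound on `K`.
Freezing `y` and writing `φ(x)` for the triple sum of `r·w`, the monotonicity of the triple sum in
both variables turns this into the linear recurrence
`φ(n+1) ≤ (1 + ΣΣ r·q) φ(n) + (ε₁ + ε₂) ΣΣ r`, which a discrete Gronwall argument solves.
-/

open Finset

theorem discrete_gronwall_of_nonpos {n₀ : ℕ} {u b c : ℕ → ℝ} (hu₀ : u n₀ ≤ 0)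
    (hu : ∀ n ≥ n₀, u (n + 1) ≤ (1 + c n) * u n + b n) (hc : ∀ n ≥ n₀, 0 ≤ c n)
    (hb : ∀ n ≥ n₀, 0 ≤ b n) ⦃n : ℕ⦄ (hn : n₀ ≤ n) :
    u n ≤ (∑ k ∈ Ico n₀ n, b k) * ∏ i ∈ Ico n₀ n, (1 + c i) := by
  have hc₁ : ∀ i ∈ Ico n₀ n, 1 ≤ 1 + c i := fun i hi =>
    le_add_of_nonneg_right (hc i (mem_Ico.mp hi).1)
  calc u n ≤ u n₀ * ∏ i ∈ Ico n₀ n, (1 + c i) +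
        ∑ k ∈ Ico n₀ n, b k * ∏ i ∈ Ico (k + 1) n, (1 + c i) :=
        discrete_gronwall_prod_general hu (fun i hi => by linarith [hc i hi]) hn
    _ ≤ 0 + ∑ k ∈ Ico n₀ n, b k * ∏ i ∈ Ico n₀ n, (1 + c i) := by
        gcongr with k hk
        · exact mul_nonpos_of_nonpos_of_nonneg hu₀ (zero_le_one.trans (one_le_prod hc₁))
        · exact hb k (mem_Ico.mp hk).1
        · have hsub : Ico (k + 1) n ⊆ Ico n₀ n := Ico_subset_Ico_left (by grind)
          exact fun i hi => zero_le_one.trans (hc₁ i (hsub hi))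
        · exact fun i hi _ => hc₁ i hi
        · grind
    _ = (∑ k ∈ Ico n₀ n, b k) * ∏ i ∈ Ico n₀ n, (1 + c i) := by rw [zero_add, sum_mul]

section SumOperator

variable (x₀ y₀ : ℕ)

/-- The delta integral `∫_{x₀}^{s} ∫_{y₀}^{y} f(η,τ) Δτ Δη` on `ℤ × ℤ`. -/
def rectSum (f : ℕ → ℕ → ℝ) (s y : ℕ) : ℝ :=
  ∑ η ∈ Ico x₀ s, ∑ τ ∈ Ico y₀ y, f η τ

/-- The delta integral `∫_{x₀}^{x} ∫_{x₀}^{s} ∫_{y₀}^{y} f(η,τ) Δτ Δη Δs` on `ℤ × ℤ`. -/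
def tripleSum (f : ℕ → ℕ → ℝ) (x y : ℕ) : ℝ :=
  ∑ s ∈ Ico x₀ x, rectSum x₀ y₀ f s y

variable {x₀ y₀} {f : ℕ → ℕ → ℝ}

theorem rectSum_nonneg (hf : ∀ a b, 0 ≤ f a b) (s y : ℕ) : 0 ≤ rectSum x₀ y₀ f s y :=
  sum_nonneg fun _ _ => sum_nonneg fun _ _ => hf _ _

theorem rectSum_mono (hf : ∀ a b, 0 ≤ f a b) {s s' y y' : ℕ} (hs : s ≤ s') (hy : y ≤ y') :
    rectSum x₀ y₀ f s y ≤ rectSum x₀ y₀ f s' y' :=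
  calc rectSum x₀ y₀ f s y ≤ rectSum x₀ y₀ f s y' :=
        sum_le_sum fun _ _ => sum_le_sum_of_subset_of_nonneg (Ico_subset_Ico_right hy)
          fun _ _ _ => hf _ _
    _ ≤ rectSum x₀ y₀ f s' y' :=
        sum_le_sum_of_subset_of_nonneg (Ico_subset_Ico_right hs)
          fun _ _ _ => sum_nonneg fun _ _ => hf _ _

theorem tripleSum_mono (hf : ∀ a b, 0 ≤ f a b) {x x' y y' : ℕ} (hx : x ≤ x') (hy : y ≤ y') :
    tripleSum x₀ y₀ f x y ≤ tripleSum x₀ y₀ f x' y' :=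
  calc tripleSum x₀ y₀ f x y ≤ tripleSum x₀ y₀ f x y' :=
        sum_le_sum fun _ _ => rectSum_mono hf le_rfl hy
    _ ≤ tripleSum x₀ y₀ f x' y' :=
        sum_le_sum_of_subset_of_nonneg (Ico_subset_Ico_right hx)
          fun _ _ _ => rectSum_nonneg hf _ _

theorem tripleSum_succ {x : ℕ} (hx : x₀ ≤ x) (y : ℕ) :
    tripleSum x₀ y₀ f (x + 1) y = tripleSum x₀ y₀ f x y + rectSum x₀ y₀ f x y :=
  sum_Ico_succ_top hx _

theorem abs_tripleSum_sub_le (f g : ℕ → ℕ → ℝ) (x y : ℕ) :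
    |tripleSum x₀ y₀ f x y - tripleSum x₀ y₀ g x y| ≤
      tripleSum x₀ y₀ (fun a b => |f a b - g a b|) x y := by
  simp only [tripleSum, rectSum, ← sum_sub_distrib]
  refine (abs_sum_le_sum_abs _ _).trans (sum_le_sum fun s _ => ?_)
  refine (abs_sum_le_sum_abs _ _).trans (sum_le_sum fun a _ => ?_)
  exact abs_sum_le_sum_abs _ _

end SumOperator

section SumInequality

variable {x₀ y₀ : ℕ} {q r w : ℕ → ℕ → ℝ} {ε : ℝ}

theorem tripleSum_succ_le (hw : ∀ a b, 0 ≤ w a b) (hq : ∀ a b, 0 ≤ q a b)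
    (hr : ∀ a b, 0 ≤ r a b)
    (h : ∀ a b, x₀ ≤ a → y₀ ≤ b →
      w a b ≤ ε + q a b * tripleSum x₀ y₀ (fun η τ => r η τ * w η τ) a b)
    {n : ℕ} (hn : x₀ ≤ n) (y : ℕ) :
    tripleSum x₀ y₀ (fun η τ => r η τ * w η τ) (n + 1) y ≤
      (1 + rectSum x₀ y₀ (fun η τ => r η τ * q η τ) n y) *
          tripleSum x₀ y₀ (fun η τ => r η τ * w η τ) n y
        + ε * rectSum x₀ y₀ r n y := by
  set φ := tripleSum x₀ y₀ (fun η τ => r η τ * w η τ) n y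
  have hrect : rectSum x₀ y₀ (fun η τ => r η τ * w η τ) n y ≤
      rectSum x₀ y₀ (fun η τ => r η τ * (ε + q η τ * φ)) n y := by
    refine sum_le_sum fun a ha => sum_le_sum fun b hb => ?_
    obtain ⟨ha₀, ha⟩ := mem_Ico.mp ha
    obtain ⟨hb₀, hb⟩ := mem_Ico.mp hb
    have hmono : tripleSum x₀ y₀ (fun η τ => r η τ * w η τ) a b ≤ φ :=
      tripleSum_mono (fun η τ => mul_nonneg (hr η τ) (hw η τ)) ha.le hb.le
    exact mul_le_mul_of_nonneg_left
      ((h a b ha₀ hb₀).trans (add_le_add_right (mul_le_mul_of_nonneg_left hmono (hq a b)) ε))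
      (hr a b)
  have hlin : rectSum x₀ y₀ (fun η τ => r η τ * (ε + q η τ * φ)) n y =
      rectSum x₀ y₀ (fun η τ => r η τ * q η τ) n y * φ + ε * rectSum x₀ y₀ r n y := by
    simp only [rectSum, mul_sum, sum_mul, ← sum_add_distrib]
    exact sum_congr rfl fun _ _ => sum_congr rfl fun _ _ => by ring
  rw [tripleSum_succ hn]
  linarith

theorem le_of_le_add_mul_tripleSum (hw : ∀ a b, 0 ≤ w a b) (hq : ∀ a b, 0 ≤ q a b)
    (hr : ∀ a b, 0 ≤ r a b)
    (h : ∀ a b, x₀ ≤ a → y₀ ≤ b →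
      w a b ≤ ε + q a b * tripleSum x₀ y₀ (fun η τ => r η τ * w η τ) a b)
    {x y : ℕ} (hx : x₀ ≤ x) (hy : y₀ ≤ y) :
    w x y ≤ ε * (1 + q x y * tripleSum x₀ y₀ r x y *
      ∏ s ∈ Ico x₀ x, (1 + rectSum x₀ y₀ (fun η τ => r η τ * q η τ) s y)) := by
  -- at the corner `(x₀, y₀)` the triple sum is empty
  have hε : 0 ≤ ε := by simpa [tripleSum] using (hw x₀ y₀).trans (h x₀ y₀ le_rfl le_rfl)
  have hφ := discrete_gronwall_of_nonpos
    (u := fun n => tripleSum x₀ y₀ (fun η τ => r η τ * w η τ) n y) (by simp [tripleSum])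
    (fun n hn => tripleSum_succ_le hw hq hr h hn y)
    (fun n _ => rectSum_nonneg (fun a b => mul_nonneg (hr a b) (hq a b)) n y)
    (fun n _ => mul_nonneg hε (rectSum_nonneg hr n y)) hx
  rw [← mul_sum] at hφ
  calc w x y ≤ ε + q x y * tripleSum x₀ y₀ (fun η τ => r η τ * w η τ) x y := h x y hx hy
    _ ≤ ε + q x y * (ε * tripleSum x₀ y₀ r x y *
          ∏ s ∈ Ico x₀ x, (1 + rectSum x₀ y₀ (fun η τ => r η τ * q η τ) s y)) := by
        gcongr
        exacts [hq x y, hφ]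
    _ = _ := by ring

theorem abs_sub_le_add_mul_tripleSum {g : ℕ → ℕ → ℝ} {K : ℕ → ℕ → ℕ → ℕ → ℝ → ℝ}
    (hK_lip : ∀ x y η τ, ∀ a b : ℝ, |K x y η τ a - K x y η τ b| ≤ q x y * r η τ * |a - b|)
    {u₁ u₂ : ℕ → ℕ → ℝ} {ε₁ ε₂ : ℝ} {x y : ℕ}
    (h₁ : |u₁ x y - (g x y + tripleSum x₀ y₀ (fun η τ => K x y η τ (u₁ η τ)) x y)| ≤ ε₁)
    (h₂ : |u₂ x y - (g x y + tripleSum x₀ y₀ (fun η τ => K x y η τ (u₂ η τ)) x y)| ≤ ε₂) :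
    |u₁ x y - u₂ x y| ≤
      ε₁ + ε₂ + q x y * tripleSum x₀ y₀ (fun η τ => r η τ * |u₁ η τ - u₂ η τ|) x y := by
  have hK : |tripleSum x₀ y₀ (fun η τ => K x y η τ (u₁ η τ)) x y -
      tripleSum x₀ y₀ (fun η τ => K x y η τ (u₂ η τ)) x y| ≤
      q x y * tripleSum x₀ y₀ (fun η τ => r η τ * |u₁ η τ - u₂ η τ|) x y := by
    refine (abs_tripleSum_sub_le _ _ x y).trans ?_
    simp only [tripleSum, rectSum, mul_sum, ← mul_assoc]
    exact sum_le_sum fun _ _ => sum_le_sum fun _ _ => sum_le_sum fun _ _ => hK_lip _ _ _ _ _ _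
  rw [abs_le] at h₁ h₂ hK ⊢
  constructor <;> linarith [h₁.1, h₁.2, h₂.1, h₂.2, hK.1, hK.2]

end SumInequality

theorem stmt_11_general (x₀ y₀ : ℕ) (g : ℕ → ℕ → ℝ) (K : ℕ → ℕ → ℕ → ℕ → ℝ → ℝ)
    (q r : ℕ → ℕ → ℝ) (ε₁ ε₂ : ℝ) (u₁ u₂ : ℕ → ℕ → ℝ)
    (hq_nonneg : ∀ x y, 0 ≤ q x y)
    (hr_nonneg : ∀ x y, 0 ≤ r x y)
    (hK_lip : ∀ x y η τ, ∀ a b : ℝ,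
      |K x y η τ a - K x y η τ b| ≤ q x y * r η τ * |a - b|)
    (hu₁_approx : ∀ x y, x₀ ≤ x → y₀ ≤ y →
      |u₁ x y - (g x y + ∑ s ∈ Finset.Ico x₀ x, ∑ η ∈ Finset.Ico x₀ s,
        ∑ τ ∈ Finset.Ico y₀ y, K x y η τ (u₁ η τ))| ≤ ε₁)
    (hu₂_approx : ∀ x y, x₀ ≤ x → y₀ ≤ y →
      |u₂ x y - (g x y + ∑ s ∈ Finset.Ico x₀ x, ∑ η ∈ Finset.Ico x₀ s,
        ∑ τ ∈ Finset.Ico y₀ y, K x y η τ (u₂ η τ))| ≤ ε₂) :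
    ∀ x y, x₀ ≤ x → y₀ ≤ y →
      |u₁ x y - u₂ x y| ≤ (ε₁ + ε₂) *
        (1 + q x y * (∑ s ∈ Finset.Ico x₀ x, ∑ η ∈ Finset.Ico x₀ s,
            ∑ τ ∈ Finset.Ico y₀ y, r η τ) *
          ∏ s ∈ Finset.Ico x₀ x,
            (1 + ∑ η ∈ Finset.Ico x₀ s, ∑ τ ∈ Finset.Ico y₀ y,
              r η τ * q η τ)) := fun _ _ hx hy =>
  le_of_le_add_mul_tripleSum (w := fun a b => |u₁ a b - u₂ a b|) (fun _ _ => abs_nonneg _)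
    hq_nonneg hr_nonneg
    (fun _ _ ha hb => abs_sub_le_add_mul_tripleSum hK_lip (hu₁_approx _ _ ha hb)
      (hu₂_approx _ _ ha hb)) hx hy

/-- Discrete (𝕋₁ = 𝕋₂ = ℤ) case of Theorem 3.2: closeness of two
ε-approximate solutions of the sum equation
u(x,y) = g(x,y) + ΣΣΣ K(x,y,η,τ,u(η,τ)). -/
theorem stmt_11 (x₀ y₀ : ℕ) (g : ℕ → ℕ → ℝ) (K : ℕ → ℕ → ℕ → ℕ → ℝ → ℝ)
    (q r : ℕ → ℕ → ℝ) (ε₁ ε₂ : ℝ) (u₁ u₂ : ℕ → ℕ → ℝ)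
    (hq_nonneg : ∀ x y, 0 ≤ q x y)
    (hr_nonneg : ∀ x y, 0 ≤ r x y)
    (hK_lip : ∀ x y η τ, ∀ a b : ℝ,
      |K x y η τ a - K x y η τ b| ≤ q x y * r η τ * |a - b|)
    (hε₁ : 0 ≤ ε₁) (hε₂ : 0 ≤ ε₂)
    (hu₁_approx : ∀ x y, x₀ ≤ x → y₀ ≤ y →
      |u₁ x y - (g x y + ∑ s ∈ Finset.Ico x₀ x, ∑ η ∈ Finset.Ico x₀ s,
        ∑ τ ∈ Finset.Ico y₀ y, K x y η τ (u₁ η τ))| ≤ ε₁)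
    (hu₂_approx : ∀ x y, x₀ ≤ x → y₀ ≤ y →
      |u₂ x y - (g x y + ∑ s ∈ Finset.Ico x₀ x, ∑ η ∈ Finset.Ico x₀ s,
        ∑ τ ∈ Finset.Ico y₀ y, K x y η τ (u₂ η τ))| ≤ ε₂) :
    ∀ x y, x₀ ≤ x → y₀ ≤ y →
      |u₁ x y - u₂ x y| ≤ (ε₁ + ε₂) *
        (1 + q x y * (∑ s ∈ Finset.Ico x₀ x, ∑ η ∈ Finset.Ico x₀ s,
            ∑ τ ∈ Finset.Ico y₀ y, r η τ) *
          ∏ s ∈ Finset.Ico x₀ x,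
            (1 + ∑ η ∈ Finset.Ico x₀ s, ∑ τ ∈ Finset.Ico y₀ y,
              r η τ * q η τ)) :=
  stmt_11_general x₀ y₀ g K q r ε₁ ε₂ u₁ u₂ hq_nonneg hr_nonneg hK_lip hu₁_approx hu₂_approx
end
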